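/- Let n ∈ ℕ, let β, γ ∈ ℝ and Δt > 0, and let M₁, K₁, K₂ be n × n real matrices with M₁ invertible. Define the Schur complement S = M₁ + (βM₁ + γK₂)·M₁⁻¹·(Δt·K₁) and its approximation Ŝ = (M₁ + √Δt·(βM₁ + γK₂))·M₁⁻¹·(M₁ + √Δt·K₁). Then Ŝ = S + √Δt·(βM₁ + γK₂ + K₁); in particular the approximation error Ŝ − S equals √Δt times the Δt-independent matrix βM₁ + γK₂ + K₁. -/

import Mathlib

/-! Expanding the product, the two cross terms collapse through `M₁⁻¹ M₁ = M₁ M₁⁻¹ = 1` to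
`√Δt • (βM₁ + γK₂)` and `√Δt • K₁`, while the quadratic term carries `(√Δt)² = Δt` and is
exactly the off-diagonal part of `S`. -/

theorem add_smul_mul_mul_add_smul_of_mul_eq_one {R A : Type*} [CommSemiring R] [Semiring A]
    [Algebra R A] {M M' : A} (hMM' : M * M' = 1) (hM'M : M' * M = 1) (s : R) (P Q : A) :
    (M + s • P) * M' * (M + s • Q) = M + s • (P + Q) + (s * s) • (P * M' * Q) := by
  simp only [add_mul, mul_add, smul_mul_assoc, mul_smul_comm, mul_assoc, hM'M, mul_one,
    hMM', one_mul, smul_smul, smul_add]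
  abel

theorem stmt_11 (n : ℕ) (β γ Δt : ℝ) (hΔt : 0 < Δt)
    (M₁ K₁ K₂ : Matrix (Fin n) (Fin n) ℝ) (hM : IsUnit M₁.det)
    (S Sh : Matrix (Fin n) (Fin n) ℝ)
    (hS : S = M₁ + (β • M₁ + γ • K₂) * M₁⁻¹ * (Δt • K₁))
    (hSh : Sh = (M₁ + Real.sqrt Δt • (β • M₁ + γ • K₂)) * M₁⁻¹ * (M₁ + Real.sqrt Δt • K₁)) :
    Sh = S + Real.sqrt Δt • (β • M₁ + γ • K₂ + K₁) := by
  rw [hSh, hS, add_smul_mul_mul_add_smul_of_mul_eq_one (M₁.mul_nonsing_inv hM)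
    (M₁.nonsing_inv_mul hM), Real.mul_self_sqrt hΔt.le, Matrix.mul_smul, add_right_comm]
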